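/- Explicit solution of the connection equation for a real Jordan block. Fix n ≥ 2, ε ∈ {+1, −1}, and let N ∈ Mat_n(ℝ) be the nilpotent Jordan block (N_{j,j+1} = 1 for 1 ≤ j ≤ n−1, all other entries 0) and G ∈ Mat_n(ℝ) the matrix with G_{ij} = ε if i + j = n + 1 and 0 otherwise. For u ∈ ℝ^n define M(u) ∈ Mat_n(ℝ) by: M_{1,1} = ((n−2)/2)·u_n; M_{1,j} = (n/2)·u_{n−j+1} for 2 ≤ j ≤ n−1; M_{1,n} = n·u_1; M_{j,j} = −u_n for 2 ≤ j ≤ n−1; M_{j,n} = (n/2)·u_j for 2 ≤ j ≤ n−1; M_{n,n} = ((n−2)/2)·u_n; all other entries 0. Define B(u) ∈ Mat_n(ℝ) by: B_{1,j} = (n/2)·u_{n−j} for 1 ≤ j ≤ n−1; B_{1,n} = 0; B_{j+1,j} = (j − n/2)·u_n for 1 ≤ j ≤ n−1; B_{j,n} = −(n/2)·u_{j−1} for 2 ≤ j ≤ n; all other entries 0. Then for every u ∈ ℝ^n, B(u) is the unique matrix B ∈ Mat_n(ℝ) satisfying both B N − N B = M(u) and Bᵀ G + G B = 0. -/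

import Mathlib

/-!
A matrix commuting with the nilpotent Jordan block `N` is an upper triangular Toeplitz matrix,
hence determined by its first row `c`. The last row of `Dᵀ G + G D = 0` then reads `2 ε c = 0`,
so the difference of two solutions vanishes. That `B(u)` is a solution is an entrywise check.
-/

open Matrix

namespace Matrix

def jordanShift (R : Type*) [Zero R] [One R] (n : ℕ) : Matrix (Fin n) (Fin n) R :=
  of fun i j => if (j : ℕ) = i + 1 then 1 else 0

variable {R : Type*} {n : ℕ}

def antiDiag [Zero R] (n : ℕ) (ε : R) : Matrix (Fin n) (Fin n) R :=
  of fun i j => if (i : ℕ) + j + 1 = n then ε else 0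

section NonUnital
variable [NonUnitalNonAssocSemiring R]

theorem antiDiag_mul_apply (ε : R) (A : Matrix (Fin n) (Fin n) R) (i j : Fin n) :
    (antiDiag n ε * A) i j = ε * A i.rev j := by
  rw [mul_apply, Finset.sum_eq_single i.rev]
  · rw [antiDiag, of_apply, if_pos (by rw [Fin.val_rev]; omega)]
  · intro k _ hk
    rw [antiDiag, of_apply, if_neg fun h => hk (Fin.ext (by rw [Fin.val_rev]; omega)), zero_mul]
  · simp

theorem mul_antiDiag_apply (ε : R) (A : Matrix (Fin n) (Fin n) R) (i j : Fin n) :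
    (A * antiDiag n ε) i j = A i j.rev * ε := by
  rw [mul_apply, Finset.sum_eq_single j.rev]
  · rw [antiDiag, of_apply, if_pos (by rw [Fin.val_rev]; omega)]
  · intro k _ hk
    rw [antiDiag, of_apply, if_neg fun h => hk (Fin.ext (by rw [Fin.val_rev]; omega)), mul_zero]
  · simp

end NonUnital

section Semiring
variable [NonAssocSemiring R]

theorem mul_jordanShift_apply (A : Matrix (Fin n) (Fin n) R) (i j : Fin n) :
    (A * jordanShift R n) i j = if h : 0 < (j : ℕ) then A i ⟨j - 1, by omega⟩ else 0 := by
  rw [mul_apply]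
  split_ifs with h
  · rw [Finset.sum_eq_single ⟨j - 1, by omega⟩]
    · rw [jordanShift, of_apply, if_pos (by dsimp only; omega), mul_one]
    · intro k _ hk
      rw [jordanShift, of_apply, if_neg fun h' => hk (Fin.ext (by dsimp only; omega)), mul_zero]
    · simp
  · exact Finset.sum_eq_zero fun k _ => by rw [jordanShift, of_apply, if_neg (by omega), mul_zero]

theorem jordanShift_mul_apply (A : Matrix (Fin n) (Fin n) R) (i j : Fin n) :
    (jordanShift R n * A) i j = if h : (i : ℕ) + 1 < n then A ⟨i + 1, h⟩ j else 0 := by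
  rw [mul_apply]
  split_ifs with h
  · rw [Finset.sum_eq_single ⟨i + 1, h⟩]
    · rw [jordanShift, of_apply, if_pos rfl, one_mul]
    · intro k _ hk
      rw [jordanShift, of_apply, if_neg fun h' => hk (Fin.ext h'), zero_mul]
    · simp
  · exact Finset.sum_eq_zero fun k _ => by rw [jordanShift, of_apply, if_neg (by omega), zero_mul]

theorem apply_eq_of_commute_jordanShift {A : Matrix (Fin n) (Fin n) R}
    (hA : Commute A (jordanShift R n)) (i j : ℕ) (hi : i < n) (hj : j < n) :
    A ⟨i, hi⟩ ⟨j, hj⟩ = if i ≤ j then A ⟨0, by omega⟩ ⟨j - i, by omega⟩ else 0 := by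
  induction i generalizing j with
  | zero => simp
  | succ i ih =>
    have h := congrFun (congrFun hA.eq ⟨i, by omega⟩) ⟨j, hj⟩
    rw [mul_jordanShift_apply, jordanShift_mul_apply, dif_pos hi] at h
    dsimp only at h
    rw [← h]
    split_ifs with hj0 hij hij
    · rw [ih (j - 1) (by omega), if_pos (by omega)]
      congr 2; omega
    · rw [ih (j - 1) (by omega), if_neg (by omega)]
    · omega
    · rfl

end Semiring

theorem eq_zero_of_commute_jordanShift_of_skew [CommRing R] [NoZeroDivisors R] [NeZero (2 : R)]
    {ε : R} (hε : ε ≠ 0) {A : Matrix (Fin n) (Fin n) R} (hA : Commute A (jordanShift R n))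
    (hskew : Aᵀ * antiDiag n ε + antiDiag n ε * A = 0) : A = 0 := by
  have hrow : ∀ (k : ℕ) (hk : k < n), A ⟨0, by omega⟩ ⟨k, hk⟩ = 0 := by
    intro k hk
    have hlast : (⟨n - 1, by omega⟩ : Fin n).rev = ⟨0, by omega⟩ := by
      ext; rw [Fin.val_rev]; dsimp only; omega
    have hcorner : A (⟨k, hk⟩ : Fin n).rev ⟨n - 1, by omega⟩ = A ⟨0, by omega⟩ ⟨k, hk⟩ := by
      rw [show (⟨k, hk⟩ : Fin n).rev = ⟨n - (k + 1), by omega⟩ from Fin.ext (Fin.val_rev _),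
        apply_eq_of_commute_jordanShift hA, if_pos (by omega)]
      congr 2; omega
    have h := congrFun (congrFun hskew ⟨n - 1, by omega⟩) ⟨k, hk⟩
    rw [Matrix.add_apply, mul_antiDiag_apply, antiDiag_mul_apply, transpose_apply, zero_apply,
      hlast, hcorner, mul_comm, ← two_mul, ← mul_assoc] at h
    exact (mul_eq_zero.mp h).resolve_left (mul_ne_zero two_ne_zero hε)
  ext ⟨i, hi⟩ ⟨j, hj⟩
  rw [apply_eq_of_commute_jordanShift hA]
  split_ifs
  · exact hrow _ _
  · rfl

end Matrix

noncomputable def connectionRhs {n : ℕ} (hn : 1 < n) (u : Fin n → ℝ) :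
    Matrix (Fin n) (Fin n) ℝ :=
  of fun i j : Fin n =>
    if (i : ℕ) = 0 ∧ (j : ℕ) = 0 then (((n : ℝ) - 2) / 2) * u ⟨n - 1, Nat.sub_one_lt_of_lt hn⟩
    else if (i : ℕ) = 0 ∧ (j : ℕ) + 1 = n then (n : ℝ) * u ⟨0, Nat.zero_lt_of_lt hn⟩
    else if (i : ℕ) = 0 then
      ((n : ℝ) / 2) * u ⟨n - 1 - j, (Nat.sub_le _ _).trans_lt (Nat.sub_one_lt_of_lt hn)⟩
    else if (i : ℕ) = (j : ℕ) ∧ (j : ℕ) + 1 < n then -u ⟨n - 1, Nat.sub_one_lt_of_lt hn⟩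
    else if (j : ℕ) + 1 = n ∧ (i : ℕ) + 1 < n then ((n : ℝ) / 2) * u i
    else if (i : ℕ) + 1 = n ∧ (j : ℕ) + 1 = n then
      (((n : ℝ) - 2) / 2) * u ⟨n - 1, Nat.sub_one_lt_of_lt hn⟩
    else 0

noncomputable def connectionSolution {n : ℕ} (hn : 1 < n) (u : Fin n → ℝ) :
    Matrix (Fin n) (Fin n) ℝ :=
  of fun i j : Fin n =>
    if (i : ℕ) = 0 ∧ (j : ℕ) + 1 = n then 0
    else if (i : ℕ) = 0 then
      ((n : ℝ) / 2) * u ⟨n - j - 2, (Nat.sub_lt (Nat.sub_pos_of_lt j.isLt) two_pos).trans_le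
        (Nat.sub_le n j)⟩
    else if (j : ℕ) + 1 = n then -((n : ℝ) / 2) * u ⟨i - 1, (Nat.sub_le _ _).trans_lt i.isLt⟩
    else if (i : ℕ) = (j : ℕ) + 1 then
      (((j : ℕ) + 1 : ℝ) - (n : ℝ) / 2) * u ⟨n - 1, Nat.sub_one_lt_of_lt hn⟩
    else 0

theorem connectionSolution_mul_jordanShift_sub {n : ℕ} (hn : 1 < n) (u : Fin n → ℝ) :
    connectionSolution hn u * jordanShift ℝ n - jordanShift ℝ n * connectionSolution hn u =
      connectionRhs hn u := by
  ext ⟨i, hi⟩ ⟨j, hj⟩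
  rw [Matrix.sub_apply, mul_jordanShift_apply, jordanShift_mul_apply]
  simp only [connectionSolution, connectionRhs, of_apply]
  have hi' : i = 0 ∨ (0 < i ∧ i + 1 < n) ∨ i + 1 = n := by omega
  have hj' : j = 0 ∨ (0 < j ∧ j + 1 < n) ∨ j + 1 = n := by omega
  rcases hi' with hi' | hi' | hi' <;> rcases hj' with hj' | hj' | hj' <;>
    simp (disch := omega) only [if_pos, if_neg, dif_pos, dif_neg, Nat.cast_sub, Nat.cast_one]
  · subst hj'; ring
  · simp only [show n - (j - 1) - 2 = n - 1 - j by omega]; ring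
  · simp only [show n - (j - 1) - 2 = 0 by omega, show i + 1 - 1 = 0 by omega]; ring
  · rw [sub_self]
  · by_cases hij : i = j
    · simp (disch := omega) only [if_pos]; ring
    · simp (disch := omega) only [if_neg]; rw [sub_self]
  · simp only [Nat.add_sub_cancel]; ring
  · rw [sub_self]
  · rw [sub_self]
  · have hjn : (j : ℝ) + 1 = n := by exact_mod_cast hj'
    linear_combination u ⟨n - 1, by omega⟩ * hjn

theorem transpose_connectionSolution_mul_antiDiag_add {n : ℕ} (hn : 1 < n) (ε : ℝ)
    (u : Fin n → ℝ) :
    (connectionSolution hn u)ᵀ * antiDiag n ε + antiDiag n ε * connectionSolution hn u = 0 := by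
  ext ⟨i, hi⟩ ⟨j, hj⟩
  rw [Matrix.add_apply, mul_antiDiag_apply, antiDiag_mul_apply, transpose_apply,
    Matrix.zero_apply]
  simp only [connectionSolution, of_apply, Fin.val_rev]
  have hi' : i + 1 = n ∨ i + 1 < n := by omega
  have hj' : j + 1 = n ∨ j + 1 < n := by omega
  rcases hi' with hi' | hi' <;> rcases hj' with hj' | hj' <;>
    simp (disch := omega) only [if_pos, if_neg]
  · ring
  · simp only [show n - (j + 1) - 1 = n - j - 2 by omega]; ring
  · simp only [show n - (i + 1) - 1 = n - i - 2 by omega]; ring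
  · -- both entries lie on the subdiagonal exactly when i + j + 2 = n, and then their weights cancel
    by_cases hij : i + j + 2 = n
    · have hijn : (i : ℝ) + j + 2 = n := by exact_mod_cast hij
      simp (disch := omega) only [if_pos]
      linear_combination ε * u ⟨n - 1, by omega⟩ * hijn
    · simp (disch := omega) only [if_neg]; ring

/-- Indices in the informal statement are 1-based; here `Fin n` is 0-based, so the informal
entry (I, J) is the entry (i, j) with I = i+1, J = j+1, and the informal coordinate u_t is
`u ⟨t-1, _⟩`. -/
theorem connection_equation_explicit_solution
    (n : ℕ) (hn : 2 ≤ n) (ε : ℝ) (hε : ε = 1 ∨ ε = -1) :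
    let N : Matrix (Fin n) (Fin n) ℝ := fun i j => if (j : ℕ) = (i : ℕ) + 1 then 1 else 0
    let G : Matrix (Fin n) (Fin n) ℝ := fun i j => if (i : ℕ) + (j : ℕ) + 1 = n then ε else 0
    let M : (Fin n → ℝ) → Matrix (Fin n) (Fin n) ℝ := fun u i j =>
      if (i : ℕ) = 0 ∧ (j : ℕ) = 0 then (((n : ℝ) - 2) / 2) * u ⟨n - 1, by omega⟩
      else if (i : ℕ) = 0 ∧ (j : ℕ) + 1 = n then (n : ℝ) * u ⟨0, by omega⟩
      else if (i : ℕ) = 0 then ((n : ℝ) / 2) * u ⟨n - 1 - (j : ℕ), by omega⟩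
      else if (i : ℕ) = (j : ℕ) ∧ (j : ℕ) + 1 < n then -u ⟨n - 1, by omega⟩
      else if (j : ℕ) + 1 = n ∧ (i : ℕ) + 1 < n then ((n : ℝ) / 2) * u ⟨(i : ℕ), by omega⟩
      else if (i : ℕ) + 1 = n ∧ (j : ℕ) + 1 = n then (((n : ℝ) - 2) / 2) * u ⟨n - 1, by omega⟩
      else 0
    let B : (Fin n → ℝ) → Matrix (Fin n) (Fin n) ℝ := fun u i j =>
      if (i : ℕ) = 0 ∧ (j : ℕ) + 1 = n then 0
      else if (i : ℕ) = 0 then ((n : ℝ) / 2) * u ⟨n - (j : ℕ) - 2, by omega⟩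
      else if (j : ℕ) + 1 = n then -((n : ℝ) / 2) * u ⟨(i : ℕ) - 1, by omega⟩
      else if (i : ℕ) = (j : ℕ) + 1 then (((j : ℕ) + 1 : ℝ) - (n : ℝ) / 2) * u ⟨n - 1, by omega⟩
      else 0
    ∀ u : Fin n → ℝ,
      (B u * N - N * B u = M u ∧ (B u)ᵀ * G + G * B u = 0) ∧
      ∀ B' : Matrix (Fin n) (Fin n) ℝ,
        B' * N - N * B' = M u → B'ᵀ * G + G * B' = 0 → B' = B u := by
  intro N G M B u
  have hε0 : ε ≠ 0 := by rcases hε with rfl | rfl <;> norm_num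
  have hB : B u * N - N * B u = M u := connectionSolution_mul_jordanShift_sub hn u
  have hBskew : (B u)ᵀ * G + G * B u = 0 := transpose_connectionSolution_mul_antiDiag_add hn ε u
  refine ⟨⟨hB, hBskew⟩, fun B' hB' hB'skew => ?_⟩
  have hcomm : Commute (B' - B u) N := sub_eq_zero.mp <| by
    rw [sub_mul, mul_sub, sub_sub_sub_comm, hB', hB, sub_self]
  have hskew : (B' - B u)ᵀ * G + G * (B' - B u) = 0 := by
    rw [transpose_sub, sub_mul, mul_sub, sub_add_sub_comm, hB'skew, hBskew, sub_self]
  exact sub_eq_zero.mp (eq_zero_of_commute_jordanShift_of_skew hε0 hcomm hskew)
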